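/- arXiv:1805.08270 — 6 statements merged into one kernel-verified Lean document; each statement's English description precedes it below -/
import Mathlib

section
/- Let G be a finite simple graph that is (C4,P6)-free and contains an induced 5-cycle C = v1v2v3v4v5, and let i ∈ {1,...,5} (indices modulo 5). Then for every connected component A of the subgraph of G induced by S(i), every vertex of S(i-2,i-1,i) ∪ S(i,i+1,i+2) is either complete or anti-complete to the vertex set of A. -/
/-
If `s` had both a neighbour and a non-neighbour in a component of `G[S(i)]`, some edge `xy` of
that component would have `s ~ x` and `s ≁ y`. The three neighbours of `s` on the cycle are
consecutive and end at `v i`, so for the right direction `d = ±1` the walk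
`y, x, s, v (i + 2d), v (i + 3d), v (i + 4d)` is an induced `P₆`, because `x` and `y` see only `v i`.
-/

open SimpleGraph

/-- `G` contains no induced subgraph isomorphic to `H` (`H`-freeness, via graph embeddings). -/
def Free {V W : Type*} (G : SimpleGraph V) (H : SimpleGraph W) : Prop :=
  IsEmpty (H ↪g G)

/-- `v 1, v 2, v 3, v 4, v 0` are the vertices `v₁,…,v₅` of an induced 5-cycle of `G`
(in cyclic order, indices taken modulo 5, with `v 0` playing the role of `v₅`). -/
def IsInducedC5 {V : Type*} (G : SimpleGraph V) (v : ZMod 5 → V) : Prop :=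
  Function.Injective v ∧ ∀ i j, G.Adj (v i) (v j) ↔ (j = i + 1 ∨ i = j + 1)

/-- `S(X)`: the vertices outside the cycle whose neighbourhood on the cycle is exactly
`{v i : i ∈ X}`. -/
def cycS {V : Type*} (G : SimpleGraph V) (v : ZMod 5 → V) (X : Set (ZMod 5)) : Set V :=
  {u | (∀ i, u ≠ v i) ∧ ∀ i, (G.Adj u (v i) ↔ i ∈ X)}

/-- `S_j`: the vertices outside the cycle with exactly `j` neighbours on the cycle. -/
def cycSdeg {V : Type*} (G : SimpleGraph V) (v : ZMod 5 → V) (j : ℕ) : Set V :=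
  {u | (∀ i, u ≠ v i) ∧ {i : ZMod 5 | G.Adj u (v i)}.ncard = j}

/-- `A` is complete to `B`: every vertex of `A` is adjacent to every vertex of `B`. -/
def CompleteTo {V : Type*} (G : SimpleGraph V) (A B : Set V) : Prop :=
  ∀ a ∈ A, ∀ b ∈ B, G.Adj a b

/-- `A` is anti-complete to `B`: there are no edges between `A` and `B`. -/
def AntiCompleteTo {V : Type*} (G : SimpleGraph V) (A B : Set V) : Prop :=
  ∀ a ∈ A, ∀ b ∈ B, ¬ G.Adj a b


namespace SimpleGraph

variable {V W : Type*}

theorem ConnectedComponent.forall_or_forall_not {H : SimpleGraph W} (c : H.ConnectedComponent)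
    {P : W → Prop} (hP : ∀ x y, H.Adj x y → P x → P y) :
    (∀ a ∈ c.supp, P a) ∨ ∀ a ∈ c.supp, ¬P a := by
  by_contra! ⟨⟨b, hb, hPb⟩, a, ha, hPa⟩
  obtain ⟨w⟩ := ConnectedComponent.exact (ha.trans hb.symm)
  obtain ⟨d, -, hd, hd'⟩ := w.exists_boundary_dart {x | P x} hPa hPb
  exact hd' (hP _ _ d.adj hd)

theorem injective_of_adj_iff {G : SimpleGraph V} {H : SimpleGraph W}
    (hH : ∀ p q, (∀ r, H.Adj p r ↔ H.Adj q r) → p = q) {f : W → V}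
    (hf : ∀ p q, G.Adj (f p) (f q) ↔ H.Adj p q) : Function.Injective f :=
  fun p q hpq => hH p q fun r => by rw [← hf, ← hf, hpq]

theorem pathGraph_six_eq_of_adj_iff :
    ∀ p q : Fin 6, (∀ r, (pathGraph 6).Adj p r ↔ (pathGraph 6).Adj q r) → p = q := by
  simp only [pathGraph_adj]
  decide

def pathGraphSixEmbedding {G : SimpleGraph V} {x₀ x₁ x₂ x₃ x₄ x₅ : V}
    (e₀₁ : G.Adj x₀ x₁) (e₁₂ : G.Adj x₁ x₂) (e₂₃ : G.Adj x₂ x₃) (e₃₄ : G.Adj x₃ x₄)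
    (e₄₅ : G.Adj x₄ x₅)
    (n₀₂ : ¬G.Adj x₀ x₂) (n₀₃ : ¬G.Adj x₀ x₃) (n₀₄ : ¬G.Adj x₀ x₄) (n₀₅ : ¬G.Adj x₀ x₅)
    (n₁₃ : ¬G.Adj x₁ x₃) (n₁₄ : ¬G.Adj x₁ x₄) (n₁₅ : ¬G.Adj x₁ x₅)
    (n₂₄ : ¬G.Adj x₂ x₄) (n₂₅ : ¬G.Adj x₂ x₅) (n₃₅ : ¬G.Adj x₃ x₅) :
    pathGraph 6 ↪g G :=
  have hadj : ∀ p q, G.Adj (![x₀, x₁, x₂, x₃, x₄, x₅] p) (![x₀, x₁, x₂, x₃, x₄, x₅] q) ↔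
      (pathGraph 6).Adj p q := by
    intro p q
    fin_cases p <;> fin_cases q <;>
      simp [pathGraph_adj, adj_comm, *]
  ⟨⟨_, injective_of_adj_iff pathGraph_six_eq_of_adj_iff hadj⟩, hadj _ _⟩

end SimpleGraph

theorem IsInducedC5.adj_mul_two_three_four {V : Type*} {G : SimpleGraph V} {v : ZMod 5 → V}
    (hv : IsInducedC5 G v) (i : ZMod 5) {d : ZMod 5} (hd : d = 1 ∨ d = -1) :
    G.Adj (v (i + 2 * d)) (v (i + 3 * d)) ∧ G.Adj (v (i + 3 * d)) (v (i + 4 * d)) ∧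
      ¬G.Adj (v (i + 2 * d)) (v (i + 4 * d)) := by
  simp only [hv.2, add_assoc, add_right_inj]
  rcases hd with rfl | rfl <;> decide

theorem IsInducedC5.adj_of_adj_of_mem_cycS {V : Type*} {G : SimpleGraph V}
    (hP6 : _root_.Free G (pathGraph 6)) {v : ZMod 5 → V} (hv : IsInducedC5 G v)
    {i d : ZMod 5} (hd : d = 1 ∨ d = -1) {s x y : V}
    (hx : x ∈ cycS G v {i}) (hy : y ∈ cycS G v {i}) (hxy : G.Adj x y)
    (hs₂ : G.Adj s (v (i + 2 * d))) (hs₃ : ¬G.Adj s (v (i + 3 * d)))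
    (hs₄ : ¬G.Adj s (v (i + 4 * d))) (hsx : G.Adj s x) : G.Adj s y := by
  by_contra hsy
  have honly_i : ∀ k : ZMod 5, k ≠ 0 → ∀ u ∈ cycS G v {i}, ¬G.Adj u (v (i + k * d)) := by
    intro k hk u hu
    rw [hu.2, Set.mem_singleton_iff, add_eq_left]
    rcases hd with rfl | rfl <;> simpa using hk
  obtain ⟨e₂₃, e₃₄, n₂₄⟩ := hv.adj_mul_two_three_four i hd
  exact hP6.false <| pathGraphSixEmbedding hxy.symm hsx.symm hs₂ e₂₃ e₃₄
    (fun h => hsy h.symm) (honly_i 2 (by decide) y hy) (honly_i 3 (by decide) y hy)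
    (honly_i 4 (by decide) y hy) (honly_i 2 (by decide) x hx) (honly_i 3 (by decide) x hx)
    (honly_i 4 (by decide) x hx) hs₃ hs₄ n₂₄

theorem stmt_0_general {V : Type*} (G : SimpleGraph V)
    (hP6 : _root_.Free G (pathGraph 6))
    (v : ZMod 5 → V) (hv : IsInducedC5 G v) (i : ZMod 5)
    (c : (G.induce (cycS G v {i})).ConnectedComponent)
    (s : V) (hs : s ∈ cycS G v {i - 2, i - 1, i} ∪ cycS G v {i, i + 1, i + 2}) :
    CompleteTo G {s} (Subtype.val '' c.supp) ∨
      AntiCompleteTo G {s} (Subtype.val '' c.supp) := by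
  simp only [CompleteTo, AntiCompleteTo, Set.mem_singleton_iff, forall_eq,
    Set.forall_mem_image]
  refine c.forall_or_forall_not fun x y hxy hsx => ?_
  obtain ⟨d, hd, hs₂, hs₃, hs₄⟩ : ∃ d : ZMod 5, (d = 1 ∨ d = -1) ∧ G.Adj s (v (i + 2 * d)) ∧
      ¬G.Adj s (v (i + 3 * d)) ∧ ¬G.Adj s (v (i + 4 * d)) := by
    rcases hs with hs | hs
    · refine ⟨-1, Or.inr rfl, ?_⟩
      simp only [hs.2, Set.mem_insert_iff, Set.mem_singleton_iff, sub_eq_add_neg,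
        add_right_inj, add_eq_left]
      decide
    · refine ⟨1, Or.inl rfl, ?_⟩
      simp only [hs.2, Set.mem_insert_iff, Set.mem_singleton_iff, add_right_inj,
        add_eq_left]
      decide
  exact hv.adj_of_adj_of_mem_cycS hP6 hd x.2 y.2 hxy hs₂ hs₃ hs₄ hsx

theorem stmt_0 {V : Type*} [Fintype V] (G : SimpleGraph V)
    (hC4 : _root_.Free G (cycleGraph 4)) (hP6 : _root_.Free G (pathGraph 6))
    (v : ZMod 5 → V) (hv : IsInducedC5 G v) (i : ZMod 5)
    (c : (G.induce (cycS G v {i})).ConnectedComponent)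
    (s : V) (hs : s ∈ cycS G v {i - 2, i - 1, i} ∪ cycS G v {i, i + 1, i + 2}) :
    CompleteTo G {s} (Subtype.val '' c.supp) ∨
      AntiCompleteTo G {s} (Subtype.val '' c.supp) :=
  stmt_0_general G hP6 v hv i c s hs
end

section
/- Let G be a finite simple graph that is (C4,P6)-free and contains an induced 5-cycle C = v1v2v3v4v5, and let i ∈ {1,...,5} (indices modulo 5). If x ∈ S(i) and y ∈ S(i-2,i+2) are adjacent, then no vertex of S_5 is adjacent to exactly one of x and y. -/
open SimpleGraph

/-!
A vertex `u ∈ S₅` adjacent to `x` but not to `y` would close the induced square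
`x y v_{i+2} u`, and one adjacent to `y` but not to `x` the induced square `y x v_i u`.
-/

section

variable {V : Type*} {G : SimpleGraph V}

theorem Free.adj_or_adj_of_square (hG : _root_.Free G (cycleGraph 4)) {a b c d : V}
    (hab : G.Adj a b) (hbc : G.Adj b c) (hcd : G.Adj c d) (hda : G.Adj d a)
    (hac : a ≠ c) (hbd : b ≠ d) : G.Adj a c ∨ G.Adj b d := by
  by_contra! ⟨hac', hbd'⟩
  have hf : ∀ u w : Fin 4,
      G.Adj (![a, b, c, d] u) (![a, b, c, d] w) ↔ (cycleGraph 4).Adj u w := by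
    intro u w
    fin_cases u <;> fin_cases w <;>
      simp +decide [hab, hbc, hcd, hda, hab.symm, hbc.symm, hcd.symm, hda.symm, hac', hbd',
        G.adj_comm c a, G.adj_comm d b]
  refine hG.false ⟨⟨![a, b, c, d], fun u w h => ?_⟩, hf _ _⟩
  fin_cases u <;> fin_cases w <;> simp at h ⊢ <;> simp_all

theorem Free.adj_iff_adj_of_common_neighbor (hG : _root_.Free G (cycleGraph 4)) {x y p q u : V}
    (hxy : G.Adj x y) (hxp : G.Adj x p) (hyp : ¬G.Adj y p) (hyq : G.Adj y q)
    (hxq : ¬G.Adj x q) (hpy : p ≠ y) (hqx : q ≠ x) (hup : G.Adj u p) (huq : G.Adj u q) :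
    G.Adj u x ↔ G.Adj u y := by
  have hux : u ≠ x := by rintro rfl; exact hxq huq
  have huy : u ≠ y := by rintro rfl; exact hyp hup
  constructor
  · intro hax
    by_contra hay
    rcases hG.adj_or_adj_of_square hxy hyq huq.symm hax hqx.symm huy.symm with h | h
    exacts [hxq h, hay h.symm]
  · intro hay
    by_contra hax
    rcases hG.adj_or_adj_of_square hxy.symm hxp hup.symm hay hpy.symm hux.symm with h | h
    exacts [hyp h, hax h.symm]

theorem adj_of_mem_cycSdeg_five {v : ZMod 5 → V} {u : V} (hu : u ∈ cycSdeg G v 5)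
    (j : ZMod 5) : G.Adj u (v j) := by
  have huniv : {j : ZMod 5 | G.Adj u (v j)} = Set.univ :=
    Set.eq_of_subset_of_ncard_le (Set.subset_univ _) (by simp [hu.2]) Set.finite_univ
  exact Set.eq_univ_iff_forall.mp huniv j

end

theorem stmt_1_general {V : Type*} (G : SimpleGraph V)
    (hC4 : _root_.Free G (cycleGraph 4))
    (v : ZMod 5 → V) (i : ZMod 5)
    (x y : V) (hx : x ∈ cycS G v {i}) (hy : y ∈ cycS G v {i - 2, i + 2})
    (hxy : G.Adj x y) :
    ∀ u ∈ cycSdeg G v 5, (G.Adj u x ↔ G.Adj u y) := by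
  intro u hu
  have hxv : G.Adj x (v i) := (hx.2 i).2 rfl
  have hshift : ∀ j : ZMod 5, j + 2 ≠ j ∧ j ≠ j - 2 := by decide
  have hxv' : ¬G.Adj x (v (i + 2)) := fun h => (hshift i).1 ((hx.2 _).1 h)
  have hyv : G.Adj y (v (i + 2)) := (hy.2 _).2 (Or.inr rfl)
  have hyv' : ¬G.Adj y (v i) := fun h => by
    rcases (hy.2 i).1 h with h | h
    exacts [(hshift i).2 h, (hshift i).1 h.symm]
  exact hC4.adj_iff_adj_of_common_neighbor hxy hxv hyv' hyv hxv' (hy.1 i).symm (hx.1 _).symm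
    (adj_of_mem_cycSdeg_five hu i) (adj_of_mem_cycSdeg_five hu _)

theorem stmt_1 {V : Type*} [Fintype V] (G : SimpleGraph V)
    (hC4 : _root_.Free G (cycleGraph 4)) (hP6 : _root_.Free G (pathGraph 6))
    (v : ZMod 5 → V) (hv : IsInducedC5 G v) (i : ZMod 5)
    (x y : V) (hx : x ∈ cycS G v {i}) (hy : y ∈ cycS G v {i - 2, i + 2})
    (hxy : G.Adj x y) :
    ∀ u ∈ cycSdeg G v 5, (G.Adj u x ↔ G.Adj u y) :=
  stmt_1_general G hC4 v i x y hx hy hxy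
end

section
/- Let G be a finite simple graph that is (C4,P6)-free and contains an induced 5-cycle C = v1v2v3v4v5, and let i ∈ {1,...,5} (indices modulo 5). Then every vertex of S(i-2,i+2) has no neighbour in S(i-2,i-1,i) or has no neighbour in S(i,i+1,i+2); that is, each vertex of S(i-2,i+2) is anti-complete to at least one of the sets S(i-2,i-1,i) and S(i,i+1,i+2). -/
open SimpleGraph

/-! Suppose `x` had neighbours `a ∈ S(i-2,i-1,i)` and `b ∈ S(i,i+1,i+2)`. If `a ~ b`, then
`v (i-2), a, b, v (i+2)` is an induced `C₄`; otherwise `x, a, v i, b` is one. -/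

section

variable {V : Type*} {G : SimpleGraph V}

lemma not_free_cycleGraph_four {a b c d : V} (hab : G.Adj a b) (hbc : G.Adj b c)
    (hcd : G.Adj c d) (hda : G.Adj d a) (hac : ¬ G.Adj a c) (hbd : ¬ G.Adj b d)
    (hac' : a ≠ c) (hbd' : b ≠ d) : ¬ _root_.Free G (cycleGraph 4) := by
  refine fun hC4 => hC4.false ⟨⟨![a, b, c, d], ?_⟩, ?_⟩
  · intro p q h
    fin_cases p <;> fin_cases q <;> simp_all [G.ne_of_adj, Ne.symm]
  · intro p q
    change G.Adj (![a, b, c, d] p) (![a, b, c, d] q) ↔ _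
    fin_cases p <;> fin_cases q <;> simp [cycleGraph_adj, hab, hbc, hcd, hda, hab.symm,
      hbc.symm, hcd.symm, hda.symm, hac, hbd, G.adj_comm c a, G.adj_comm d b] <;> decide

lemma antiCompleteTo_singleton_left {x : V} {B : Set V} :
    AntiCompleteTo G {x} B ↔ ∀ b ∈ B, ¬ G.Adj x b := by
  simp [AntiCompleteTo]

variable {v : ZMod 5 → V} {X : Set (ZMod 5)} {u : V} {i : ZMod 5}

lemma adj_of_mem_cycS (hu : u ∈ cycS G v X) (hi : i ∈ X) : G.Adj u (v i) :=
  (hu.2 i).2 hi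

lemma not_adj_of_mem_cycS (hu : u ∈ cycS G v X) (hi : i ∉ X) : ¬ G.Adj u (v i) :=
  fun h => hi ((hu.2 i).1 h)

end

theorem stmt_3_general {V : Type*} (G : SimpleGraph V)
    (hC4 : _root_.Free G (cycleGraph 4))
    (v : ZMod 5 → V) (hv : IsInducedC5 G v) (i : ZMod 5)
    (x : V) (hx : x ∈ cycS G v {i - 2, i + 2}) :
    AntiCompleteTo G {x} (cycS G v {i - 2, i - 1, i}) ∨
      AntiCompleteTo G {x} (cycS G v {i, i + 1, i + 2}) := by
  simp only [antiCompleteTo_singleton_left]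
  by_contra! ⟨⟨a, ha, hxa⟩, ⟨b, hb, hxb⟩⟩
  have offsets : ∀ j : ZMod 5, ¬(j + 2 = j - 2 ∨ j + 2 = j - 1 ∨ j + 2 = j) ∧
      ¬(j - 2 = j ∨ j - 2 = j + 1 ∨ j - 2 = j + 2) ∧ ¬(j = j - 2 ∨ j = j + 2) ∧
      j - 2 = j + 2 + 1 := by decide
  obtain ⟨ha_far, hb_far, hx_far, hsucc⟩ := offsets i
  have hab : a ≠ b := by
    rintro rfl
    exact not_adj_of_mem_cycS hb hb_far (adj_of_mem_cycS ha (by simp))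
  by_cases hadj : G.Adj a b
  · exact not_free_cycleGraph_four (adj_of_mem_cycS ha (by simp)).symm hadj
      (adj_of_mem_cycS hb (by simp)) ((hv.2 _ _).2 (.inl hsucc))
      (not_adj_of_mem_cycS hb hb_far ∘ G.adj_symm) (not_adj_of_mem_cycS ha ha_far)
      (fun h => hb.1 _ h.symm) (ha.1 _) hC4
  · exact not_free_cycleGraph_four hxa (adj_of_mem_cycS ha (by simp))
      (adj_of_mem_cycS hb (by simp)).symm hxb.symm (not_adj_of_mem_cycS hx hx_far) hadj
      (hx.1 i) hab hC4

theorem stmt_3 {V : Type*} [Fintype V] (G : SimpleGraph V)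
    (hC4 : _root_.Free G (cycleGraph 4)) (hP6 : _root_.Free G (pathGraph 6))
    (v : ZMod 5 → V) (hv : IsInducedC5 G v) (i : ZMod 5)
    (x : V) (hx : x ∈ cycS G v {i - 2, i + 2}) :
    AntiCompleteTo G {x} (cycS G v {i - 2, i - 1, i}) ∨
      AntiCompleteTo G {x} (cycS G v {i, i + 1, i + 2}) :=
  stmt_3_general G hC4 v hv i x hx
end

section
/- Let G be a finite simple (C4,C6,F1,F2,P6)-free strong atom containing an induced 5-cycle, and let C = v1v2v3v4v5 be an induced 5-cycle of G such that |S_5(C)| is maximum over all induced 5-cycles of G and, subject to that, |S_3(C)| is minimum. Then for each i ∈ {1,...,5} (indices modulo 5), S(i-1,i,i+1) is complete to S(i,i+1,i+2). -/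
open SimpleGraph

/-- `K` is a clique cutset of `G`: a clique whose removal increases the number of
connected components. -/
def IsCliqueCutset {V : Type*} (G : SimpleGraph V) (K : Set V) : Prop :=
  G.IsClique K ∧
    Nat.card G.ConnectedComponent < Nat.card (G.induce Kᶜ).ConnectedComponent

/-- An atom is a graph with no clique cutset. -/
def IsGraphAtom {V : Type*} (G : SimpleGraph V) : Prop :=
  ∀ K : Set V, ¬ IsCliqueCutset G K

/-- A strong atom: an atom with no universal vertex and no pair of (true) twins. -/
def IsStrongAtom {V : Type*} (G : SimpleGraph V) : Prop :=
  IsGraphAtom G ∧ (∀ u : V, ¬ ∀ w, w ≠ u → G.Adj u w) ∧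
    ∀ u w : V, G.Adj u w → ¬ ∀ z, z ≠ u → z ≠ w → (G.Adj z u ↔ G.Adj z w)

/-- The graph `F₁` of the paper: vertices `0,…,4` are `v₁,…,v₅` (a 5-cycle), `5 = x`,
`6 = y`, `7 = z`; edges: the 5-cycle, `yv₂, yv₃, zv₄, zv₅, xv₃, xv₄, xy, xz`. -/
def F1 : SimpleGraph (Fin 8) :=
  SimpleGraph.fromRel (fun a b => (a, b) ∈
    [((0 : Fin 8), (1 : Fin 8)), (1, 2), (2, 3), (3, 4), (4, 0),
     (6, 1), (6, 2), (7, 3), (7, 4), (5, 2), (5, 3), (5, 6), (5, 7)])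

/-- The graph `F₂` of the paper: vertices `0,…,4` are `v₁,…,v₅` (a 5-cycle), `5 = t`,
`6 = x`, `7 = y`; edges: the 5-cycle, `yv₂, yv₃, xv₄, xv₅, tv₅, tv₁, tv₂, tx, ty`. -/
def F2 : SimpleGraph (Fin 8) :=
  SimpleGraph.fromRel (fun a b => (a, b) ∈
    [((0 : Fin 8), (1 : Fin 8)), (1, 2), (2, 3), (3, 4), (4, 0),
     (7, 1), (7, 2), (6, 3), (6, 4), (5, 4), (5, 0), (5, 1), (5, 6), (5, 7)])

/-- The underlying 5-cycle `v₁,…,v₅` (as a map `ZMod 5 → V`, with `v 0 = v₅`) of an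
(induced) copy of `F₁` or `F₂` given by a vertex map `f : Fin 8 → V`. -/
def underlyingC5 {V : Type*} (f : Fin 8 → V) : ZMod 5 → V :=
  fun i => f ⟨(i - 1).val, by have := ZMod.val_lt (i - 1); omega⟩

/-!
Rotate the cycle so that `i = 0`, and suppose `a ∈ S(4,0,1)` and `b ∈ S(0,1,2)` are not
adjacent. Replacing `v 1` by `b` gives another induced 5-cycle `C'`. By C4-freeness every vertex
of `S₅(C)` sees `b`, so `S₅(C) ⊆ S₅(C')` and maximality gives `|S₅(C')| = |S₅(C)|`. In a C4-free
graph the neighbours of an outside vertex on an induced 5-cycle never include `v i` and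
`v (i + 2)` without `v (i + 1)`; with this, C4- and C6-freeness give
`S₃(C') \ {v 1} ⊆ S₃(C) \ {a, b}` as long as every vertex of `S(4,0)` adjacent to `b` is
adjacent to `a`, and then `|S₃(C')| < |S₃(C)|` contradicts minimality. If a vertex of `S(4,0)`
sees `b` but not `a`, the mirror-image swap (replace `v 0` by `a`) works instead, because a
vertex of `S(1,2)` seeing `a` but not `b` would close a C4 or a C6.
-/

open Function

section

variable {V : Type*} {G : SimpleGraph V}

theorem Free.elim {W : Type*} {H : SimpleGraph W} (h : _root_.Free G H) (f : W → V)
    (hf : Injective f) (hadj : ∀ i j, H.Adj i j → G.Adj (f i) (f j))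
    (hnadj : ∀ i j, i ≠ j → ¬H.Adj i j → ¬G.Adj (f i) (f j)) : False := by
  refine h.false ⟨⟨f, hf⟩, fun {i j} => ⟨fun hij => ?_, hadj i j⟩⟩
  by_contra hH
  exact hnadj i j (fun e => G.irrefl (e ▸ hij)) hH hij

theorem Free.elim_cycle4 (h : _root_.Free G (cycleGraph 4)) {a b c d : V}
    (hab : G.Adj a b) (hbc : G.Adj b c) (hcd : G.Adj c d) (hda : G.Adj d a)
    (hac : ¬G.Adj a c) (hbd : ¬G.Adj b d) (hac' : a ≠ c) (hbd' : b ≠ d) : False := by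
  refine h.elim ![a, b, c, d] ?_ ?_ ?_
  · intro i j hij
    fin_cases i <;> fin_cases j <;> simp_all [eq_comm, G.adj_comm, G.ne_of_adj]
  · intro i j hij
    fin_cases i <;> fin_cases j <;> simp_all +decide [G.adj_comm]
  · intro i j hne hij
    fin_cases i <;> fin_cases j <;> simp_all +decide [G.adj_comm]

theorem Free.elim_cycle6 (h : _root_.Free G (cycleGraph 6)) {a b c d e f : V}
    (hab : G.Adj a b) (hbc : G.Adj b c) (hcd : G.Adj c d) (hde : G.Adj d e)
    (hef : G.Adj e f) (hfa : G.Adj f a)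
    (hac : ¬G.Adj a c) (had : ¬G.Adj a d) (hae : ¬G.Adj a e)
    (hbd : ¬G.Adj b d) (hbe : ¬G.Adj b e) (hbf : ¬G.Adj b f)
    (hce : ¬G.Adj c e) (hcf : ¬G.Adj c f) (hdf : ¬G.Adj d f) : False := by
  refine h.elim ![a, b, c, d, e, f] ?_ ?_ ?_
  · intro i j hij
    fin_cases i <;> fin_cases j <;> simp_all [eq_comm, G.adj_comm, G.ne_of_adj]
  · intro i j hij
    fin_cases i <;> fin_cases j <;> simp_all +decide [G.adj_comm]
  · intro i j hne hij
    fin_cases i <;> fin_cases j <;> simp_all +decide [G.adj_comm]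

namespace IsInducedC5

variable {v : ZMod 5 → V}

theorem adj (hv : IsInducedC5 G v) {i j : ZMod 5} (h : j = i + 1 ∨ i = j + 1) :
    G.Adj (v i) (v j) :=
  (hv.2 i j).2 h

theorem not_adj (hv : IsInducedC5 G v) {i j : ZMod 5} (h : ¬(j = i + 1 ∨ i = j + 1)) :
    ¬G.Adj (v i) (v j) :=
  (hv.2 i j).not.2 h

theorem ne (hv : IsInducedC5 G v) {i j : ZMod 5} (h : i ≠ j) : v i ≠ v j :=
  hv.1.ne h

theorem comp_equiv (hv : IsInducedC5 G v) (e : ZMod 5 ≃ ZMod 5)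
    (he : ∀ i j, (e j = e i + 1 ∨ e i = e j + 1) ↔ (j = i + 1 ∨ i = j + 1)) :
    IsInducedC5 G (v ∘ e) :=
  ⟨hv.1.comp e.injective, fun i j => (hv.2 (e i) (e j)).trans (he i j)⟩

theorem update (hv : IsInducedC5 G v) {k : ZMod 5} {b : V} (hbv : ∀ j ≠ k, b ≠ v j)
    (hb : ∀ j ≠ k, (G.Adj b (v j) ↔ (j = k + 1 ∨ k = j + 1))) :
    IsInducedC5 G (update v k b) := by
  refine ⟨fun i j hij => ?_, fun i j => ?_⟩
  · rcases eq_or_ne i k with rfl | hi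
    · rcases eq_or_ne j i with rfl | hj
      · rfl
      · simp only [update_self, update_of_ne hj] at hij
        exact absurd hij (hbv j hj)
    · rcases eq_or_ne j k with rfl | hj
      · simp only [update_self, update_of_ne hi] at hij
        exact absurd hij.symm (hbv i hi)
      · simp only [update_of_ne hi, update_of_ne hj] at hij
        exact hv.1 hij
  · rcases eq_or_ne i k with rfl | hi
    · rcases eq_or_ne j i with rfl | hj
      · simpa using (by decide : ∀ k : ZMod 5, ¬(k = k + 1 ∨ k = k + 1)) j
      · simpa [update_of_ne hj] using hb j hj
    · rcases eq_or_ne j k with rfl | hj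
      · simpa [update_of_ne hi, G.adj_comm, or_comm] using hb i hi
      · simpa [update_of_ne hi, update_of_ne hj] using hv.2 i j

end IsInducedC5

open Classical in
noncomputable def cycNbrs (G : SimpleGraph V) (v : ZMod 5 → V) (u : V) : Finset (ZMod 5) :=
  {i | G.Adj u (v i)}

section cycNbrs

variable {v : ZMod 5 → V} {u : V}

@[simp]
theorem mem_cycNbrs {i : ZMod 5} : i ∈ cycNbrs G v u ↔ G.Adj u (v i) := by
  simp [cycNbrs]

theorem mem_cycSdeg_iff {n : ℕ} :
    u ∈ cycSdeg G v n ↔ (∀ i, u ≠ v i) ∧ (cycNbrs G v u).card = n := by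
  have : {i | G.Adj u (v i)} = (cycNbrs G v u : Set (ZMod 5)) := by ext; simp
  change (∀ i, u ≠ v i) ∧ {i | G.Adj u (v i)}.ncard = n ↔ _
  rw [this, Set.ncard_coe_finset]

theorem mem_cycS_coe_iff {X : Finset (ZMod 5)} :
    u ∈ cycS G v X ↔ (∀ i, u ≠ v i) ∧ cycNbrs G v u = X := by
  simp [cycS, Finset.ext_iff]

theorem cycS_coe_subset_cycSdeg (X : Finset (ZMod 5)) : cycS G v X ⊆ cycSdeg G v X.card :=
  fun _ hu => mem_cycSdeg_iff.2 ⟨hu.1, congrArg Finset.card (mem_cycS_coe_iff.1 hu).2⟩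

theorem cycNbrs_update_of_adj {k : ZMod 5} {b : V} (h : G.Adj u b) :
    cycNbrs G (update v k b) u = insert k (cycNbrs G v u) := by
  ext i
  rcases eq_or_ne i k with rfl | hi <;> simp_all [update_of_ne]

theorem cycNbrs_update_of_not_adj {k : ZMod 5} {b : V} (h : ¬G.Adj u b) :
    cycNbrs G (update v k b) u = (cycNbrs G v u).erase k := by
  ext i
  rcases eq_or_ne i k with rfl | hi <;> simp_all [update_of_ne]

end cycNbrs

theorem cycS_comp_equiv (v : ZMod 5 → V) (e : ZMod 5 ≃ ZMod 5) {X Y : Set (ZMod 5)}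
    (h : ∀ j, e j ∈ X ↔ j ∈ Y) : cycS G (v ∘ e) Y = cycS G v X := by
  ext u
  simp only [cycS, Set.mem_ofPred_eq, comp_apply, ← h]
  rw [e.forall_congr_right (q := fun j => u ≠ v j),
    e.forall_congr_right (q := fun j => G.Adj u (v j) ↔ j ∈ X)]

theorem cycSdeg_comp_equiv (v : ZMod 5 → V) (e : ZMod 5 ≃ ZMod 5) (n : ℕ) :
    cycSdeg G (v ∘ e) n = cycSdeg G v n := by
  ext u
  simp only [mem_cycSdeg_iff, comp_apply]
  rw [e.forall_congr_right (q := fun j => u ≠ v j),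
    Finset.card_equiv (t := cycNbrs G v u) e (fun i => by simp)]

def IsGapFree (s : Finset (ZMod 5)) : Prop :=
  ∀ i ∈ s, i + 2 ∈ s → i + 1 ∈ s

instance : DecidablePred IsGapFree :=
  fun s => inferInstanceAs (Decidable (∀ i ∈ s, i + 2 ∈ s → i + 1 ∈ s))

namespace IsGapFree

theorem card_ne_four {s : Finset (ZMod 5)} (hs : IsGapFree s) : s.card ≠ 4 := by
  revert s
  decide

theorem card_eq_three_of_erase {s : Finset (ZMod 5)} (hs : IsGapFree s) {k : ZMod 5}
    (h : (s.erase k).card = 3) : s.card = 3 := by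
  have := hs.card_ne_four
  rw [Finset.card_erase_eq_ite] at h
  split_ifs at h <;> omega

theorem card_eq_three_or_of_insert_one {s : Finset (ZMod 5)} (hs : IsGapFree s)
    (hs' : IsGapFree (insert 1 s)) (h : (insert 1 s).card = 3) :
    s.card = 3 ∨ s = {4, 0} ∨ s = {2, 3} := by
  revert s
  decide

end IsGapFree

theorem isGapFree_cycNbrs (hC4 : _root_.Free G (cycleGraph 4)) {v : ZMod 5 → V}
    (hv : IsInducedC5 G v) {u : V} (hu : ∀ i, u ≠ v i) : IsGapFree (cycNbrs G v u) := by
  intro i hi hi2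
  by_contra h
  simp only [mem_cycNbrs] at hi hi2 h
  exact hC4.elim_cycle4 hi (hv.adj (Or.inl rfl)) (hv.adj (Or.inl (by ring))) hi2.symm h
    (hv.not_adj ((by decide : ∀ k : ZMod 5, ¬(k + 2 = k + 1 ∨ k = k + 2 + 1)) i)) (hu _)
    (hv.ne ((by decide : ∀ k : ZMod 5, k ≠ k + 2) i))

section Swap

variable {v : ZMod 5 → V} {a b u : V}

theorem ne_update_of_ne {k : ZMod 5} (hu : ∀ i, u ≠ v i) (hub : u ≠ b) (i : ZMod 5) :
    u ≠ update v k b i := by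
  rcases eq_or_ne i k with rfl | hi
  · simpa using hub
  · simpa [update_of_ne hi] using hu i

theorem ne_of_ne_update {k : ZMod 5} (hu : ∀ i, u ≠ update v k b i) (huk : u ≠ v k)
    (i : ZMod 5) : u ≠ v i := by
  rcases eq_or_ne i k with rfl | hi
  · exact huk
  · simpa [update_of_ne hi] using hu i

theorem IsInducedC5.update_one (hv : IsInducedC5 G v) (hb : b ∈ cycS G v {0, 1, 2}) :
    IsInducedC5 G (Function.update v 1 b) :=
  hv.update (fun j _ => hb.1 j) fun j hj => (hb.2 j).trans <| by revert j; decide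

theorem cycSdeg_five_subset_update (hC4 : _root_.Free G (cycleGraph 4)) (hv : IsInducedC5 G v)
    (hb : b ∈ cycS G v {0, 1, 2}) : cycSdeg G v 5 ⊆ cycSdeg G (update v 1 b) 5 := by
  intro u hu
  rw [mem_cycSdeg_iff] at hu ⊢
  have huniv : cycNbrs G v u = Finset.univ := Finset.eq_univ_of_card _ hu.2
  have hall (i : ZMod 5) : G.Adj u (v i) := by rw [← mem_cycNbrs, huniv]; exact Finset.mem_univ i
  have hub : G.Adj u b := by
    by_contra hub
    exact hC4.elim_cycle4 (hall 0) ((hb.2 0).2 (by decide)).symm ((hb.2 2).2 (by decide))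
      (hall 2).symm hub (hv.not_adj (by decide))
      (by rintro rfl; exact absurd ((hb.2 4).1 (hall 4)) (by decide))
      (hv.ne (by decide))
  refine ⟨ne_update_of_ne hu.1 (G.ne_of_adj hub), ?_⟩
  rw [cycNbrs_update_of_adj hub, Finset.insert_eq_of_mem (mem_cycNbrs.2 (hall 1))]
  exact hu.2

theorem ne_of_mem_cycS {X Y : Set (ZMod 5)} (ha : a ∈ cycS G v X) (hb : b ∈ cycS G v Y)
    {i : ZMod 5} (hX : i ∈ X) (hY : i ∉ Y) : a ≠ b := by
  rintro rfl
  exact hY ((hb.2 i).1 ((ha.2 i).2 hX))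

theorem mem_cycSdeg_three_of_update (hC4 : _root_.Free G (cycleGraph 4))
    (hC6 : _root_.Free G (cycleGraph 6)) (hv : IsInducedC5 G v)
    (ha : a ∈ cycS G v {4, 0, 1}) (hb : b ∈ cycS G v {0, 1, 2}) (hab : ¬G.Adj a b)
    (hnb : ∀ u ∈ cycS G v {4, 0}, G.Adj u b → G.Adj u a)
    (hu : u ∈ cycSdeg G (update v 1 b) 3) (hu1 : u ≠ v 1) : u ∈ cycSdeg G v 3 := by
  rw [mem_cycSdeg_iff] at hu ⊢
  have huv : ∀ i, u ≠ v i := ne_of_ne_update hu.1 hu1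
  refine ⟨huv, ?_⟩
  have hgap := isGapFree_cycNbrs hC4 hv huv
  by_cases hub : G.Adj u b
  swap
  · rw [cycNbrs_update_of_not_adj hub] at hu
    exact hgap.card_eq_three_of_erase hu.2
  have hgap' := isGapFree_cycNbrs hC4 (hv.update_one hb) hu.1
  rw [cycNbrs_update_of_adj hub] at hu hgap'
  have hadj {X} (hX : cycNbrs G v u = X) (i) : G.Adj u (v i) ↔ i ∈ X := by
    rw [← hX, mem_cycNbrs]
  rcases hgap.card_eq_three_or_of_insert_one hgap' hu.2 with h | h | h
  · exact h
  · have hua := hnb u (by simpa using (mem_cycS_coe_iff (X := {4, 0})).2 ⟨huv, h⟩) hub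
    exact (hC4.elim_cycle4 hua ((ha.2 1).2 (by decide)) ((hb.2 1).2 (by decide)).symm hub.symm
      ((hadj h 1).not.2 (by decide)) hab (huv 1)
      (ne_of_mem_cycS ha hb (i := 4) (by decide) (by decide))).elim
  · have hu3 : G.Adj (v 3) u := ((hadj h 3).2 (by decide)).symm
    have hu4 : ¬G.Adj (v 4) u := fun h4 => (hadj h 4).not.2 (by decide) h4.symm
    have ha3 : ¬G.Adj (v 3) a := fun h3 => (ha.2 3).not.2 (by decide) h3.symm
    have ha4 : G.Adj a (v 4) := (ha.2 4).2 (by decide)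
    by_cases hua : G.Adj u a
    · exact (hC4.elim_cycle4 (hv.adj (by decide)) hu3 hua ha4 hu4 ha3 (huv 4).symm
        (ha.1 3).symm).elim
    · exact (hC6.elim_cycle6 (hv.adj (by decide)) hu3 hub ((hb.2 1).2 (by decide))
        ((ha.2 1).2 (by decide)).symm ha4 hu4 (fun h => (hb.2 4).not.2 (by decide) h.symm)
        (hv.not_adj (by decide)) (fun h => (hb.2 3).not.2 (by decide) h.symm)
        (hv.not_adj (by decide)) ha3 ((hadj h 1).not.2 (by decide)) hua
        (fun h => hab h.symm)).elim

theorem ncard_cycSdeg_three_update_lt [Finite V] (hC4 : _root_.Free G (cycleGraph 4))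
    (hC6 : _root_.Free G (cycleGraph 6)) (hv : IsInducedC5 G v)
    (ha : a ∈ cycS G v {4, 0, 1}) (hb : b ∈ cycS G v {0, 1, 2}) (hab : ¬G.Adj a b)
    (hnb : ∀ u ∈ cycS G v {4, 0}, G.Adj u b → G.Adj u a) :
    (cycSdeg G (update v 1 b) 3).ncard < (cycSdeg G v 3).ncard := by
  have hab' := ne_of_mem_cycS ha hb (i := 4) (by decide) (by decide)
  have ha3 : a ∈ cycSdeg G v 3 := cycS_coe_subset_cycSdeg {4, 0, 1} (by simpa using ha)
  have hpair : {a, b} ⊆ cycSdeg G v 3 := by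
    rintro x (rfl | rfl)
    · exact ha3
    · exact cycS_coe_subset_cycSdeg {0, 1, 2} (by simpa using hb)
  have hsub : cycSdeg G (update v 1 b) 3 ⊆ insert (v 1) (cycSdeg G v 3 \ {a, b}) := by
    intro u hu
    by_cases hu1 : u = v 1
    · exact Or.inl hu1
    refine Or.inr ⟨mem_cycSdeg_three_of_update hC4 hC6 hv ha hb hab hnb hu hu1, ?_⟩
    rintro (rfl | rfl)
    · rw [mem_cycSdeg_iff, cycNbrs_update_of_not_adj hab,
        Finset.card_erase_of_mem (mem_cycNbrs.2 ((ha.2 1).2 (by decide))),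
        (mem_cycSdeg_iff.1 ha3).2] at hu
      exact absurd hu.2 (by decide)
    · exact hu.1 1 (by simp)
  have hcard := Set.ncard_le_ncard hpair
  rw [Set.ncard_pair hab'] at hcard
  calc (cycSdeg G (update v 1 b) 3).ncard
      ≤ (insert (v 1) (cycSdeg G v 3 \ {a, b})).ncard := Set.ncard_le_ncard hsub
    _ ≤ (cycSdeg G v 3 \ {a, b}).ncard + 1 := Set.ncard_insert_le _ _
    _ = (cycSdeg G v 3).ncard - 2 + 1 := by rw [Set.ncard_sdiff hpair, Set.ncard_pair hab']
    _ < (cycSdeg G v 3).ncard := by omega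

theorem adj_of_mem_cycS_one_two (hC4 : _root_.Free G (cycleGraph 4))
    (hC6 : _root_.Free G (cycleGraph 6)) (hv : IsInducedC5 G v)
    (ha : a ∈ cycS G v {4, 0, 1}) (hb : b ∈ cycS G v {0, 1, 2}) (hab : ¬G.Adj a b)
    (hu : u ∈ cycS G v {4, 0}) (hub : G.Adj u b) (hua : ¬G.Adj u a)
    {u' : V} (hu' : u' ∈ cycS G v {1, 2}) (hu'a : G.Adj u' a) : G.Adj u' b := by
  by_contra hu'b
  have ha4 : G.Adj (v 4) a := ((ha.2 4).2 (by decide)).symm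
  have hu4 : G.Adj u (v 4) := (hu.2 4).2 (by decide)
  have hu'4 : ¬G.Adj (v 4) u' := fun h => (hu'.2 4).not.2 (by decide) h.symm
  by_cases huu' : G.Adj u' u
  · exact hC4.elim_cycle4 ha4 hu'a.symm huu' hu4 hu'4 (fun h => hua h.symm) (hu'.1 4).symm
      (ne_of_mem_cycS ha hu (i := 1) (by decide) (by decide))
  · exact hC6.elim_cycle6 ha4 hu'a.symm ((hu'.2 2).2 (by decide)) ((hb.2 2).2 (by decide)).symm
      hub.symm hu4 hu'4 (hv.not_adj (by decide)) (fun h => (hb.2 4).not.2 (by decide) h.symm)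
      ((ha.2 2).not.2 (by decide)) hab (fun h => hua h.symm) hu'b huu'
      (fun h => (hu.2 2).not.2 (by decide) h.symm)

end Swap

def IsExtremalC5 (G : SimpleGraph V) (v : ZMod 5 → V) : Prop :=
  IsInducedC5 G v ∧
    (∀ w, IsInducedC5 G w → (cycSdeg G w 5).ncard ≤ (cycSdeg G v 5).ncard) ∧
    ∀ w, IsInducedC5 G w → (cycSdeg G w 5).ncard = (cycSdeg G v 5).ncard →
      (cycSdeg G v 3).ncard ≤ (cycSdeg G w 3).ncard

namespace IsExtremalC5

variable {v : ZMod 5 → V}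

theorem ncard_cycSdeg_three_le [Finite V] (hv : IsExtremalC5 G v) {w : ZMod 5 → V}
    (hw : IsInducedC5 G w) (h5 : cycSdeg G v 5 ⊆ cycSdeg G w 5) :
    (cycSdeg G v 3).ncard ≤ (cycSdeg G w 3).ncard :=
  hv.2.2 w hw (le_antisymm (hv.2.1 w hw) (Set.ncard_le_ncard h5))

theorem comp_equiv (hv : IsExtremalC5 G v) (e : ZMod 5 ≃ ZMod 5)
    (he : ∀ i j, (e j = e i + 1 ∨ e i = e j + 1) ↔ (j = i + 1 ∨ i = j + 1)) :
    IsExtremalC5 G (v ∘ e) := by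
  simp only [IsExtremalC5, cycSdeg_comp_equiv]
  exact ⟨hv.1.comp_equiv e he, hv.2⟩

theorem adj_of_mem_cycS [Finite V] (hC4 : _root_.Free G (cycleGraph 4))
    (hC6 : _root_.Free G (cycleGraph 6)) (hv : IsExtremalC5 G v) {a b : V}
    (ha : a ∈ cycS G v {4, 0, 1}) (hb : b ∈ cycS G v {0, 1, 2}) : G.Adj a b := by
  by_contra hab
  by_cases hnb : ∀ u ∈ cycS G v {4, 0}, G.Adj u b → G.Adj u a
  · exact (hv.ncard_cycSdeg_three_le (hv.1.update_one hb)
      (cycSdeg_five_subset_update hC4 hv.1 hb)).not_gt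
      (ncard_cycSdeg_three_update_lt hC4 hC6 hv.1 ha hb hab hnb)
  push Not at hnb
  obtain ⟨u, hu, hub, hua⟩ := hnb
  set e := Equiv.subLeft (1 : ZMod 5)
  -- `j ↦ 1 - j` exchanges the roles of `a` and `b`, and the vertex `u` rules out the obstruction
  -- to swapping on the reflected cycle
  have hv' : IsExtremalC5 G (v ∘ e) :=
    hv.comp_equiv e (by simp only [e, Equiv.subLeft_apply]; decide)
  have ha' : a ∈ cycS G (v ∘ e) {0, 1, 2} := by
    rwa [cycS_comp_equiv v e (X := {4, 0, 1}) (by simp only [e, Equiv.subLeft_apply]; decide)]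
  have hb' : b ∈ cycS G (v ∘ e) {4, 0, 1} := by
    rwa [cycS_comp_equiv v e (X := {0, 1, 2}) (by simp only [e, Equiv.subLeft_apply]; decide)]
  refine (hv'.ncard_cycSdeg_three_le (hv'.1.update_one ha')
    (cycSdeg_five_subset_update hC4 hv'.1 ha')).not_gt
    (ncard_cycSdeg_three_update_lt hC4 hC6 hv'.1 hb' ha' (fun h => hab h.symm) ?_)
  intro u' hu' hu'a
  rw [cycS_comp_equiv v e (X := {1, 2}) (by simp only [e, Equiv.subLeft_apply]; decide)] at hu'
  exact adj_of_mem_cycS_one_two hC4 hC6 hv.1 ha hb hab hu hub hua hu' hu'a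

end IsExtremalC5

end

theorem stmt_7_general {V : Type*} [Fintype V] (G : SimpleGraph V)
    (hC4 : _root_.Free G (cycleGraph 4)) (hC6 : _root_.Free G (cycleGraph 6))
    (v : ZMod 5 → V) (hv : IsInducedC5 G v)
    (hmax5 : ∀ w : ZMod 5 → V, IsInducedC5 G w →
      (cycSdeg G w 5).ncard ≤ (cycSdeg G v 5).ncard)
    (hmin3 : ∀ w : ZMod 5 → V, IsInducedC5 G w →
      (cycSdeg G w 5).ncard = (cycSdeg G v 5).ncard →
      (cycSdeg G v 3).ncard ≤ (cycSdeg G w 3).ncard)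
    (i : ZMod 5) :
    CompleteTo G (cycS G v {i - 1, i, i + 1}) (cycS G v {i, i + 1, i + 2}) := by
  set e := Equiv.addRight i
  have hext : IsExtremalC5 G (v ∘ e) := IsExtremalC5.comp_equiv ⟨hv, hmax5, hmin3⟩ e
    (by simp only [e, Equiv.coe_addRight, add_right_comm _ i 1, add_left_inj, implies_true])
  intro a ha b hb
  rw [← cycS_comp_equiv v e (Y := {4, 0, 1}) fun j => (by decide : ∀ i j : ZMod 5,
    j + i ∈ ({i - 1, i, i + 1} : Set (ZMod 5)) ↔ j ∈ ({4, 0, 1} : Set (ZMod 5))) i j] at ha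
  rw [← cycS_comp_equiv v e (Y := {0, 1, 2}) fun j => (by decide : ∀ i j : ZMod 5,
    j + i ∈ ({i, i + 1, i + 2} : Set (ZMod 5)) ↔ j ∈ ({0, 1, 2} : Set (ZMod 5))) i j] at hb
  exact hext.adj_of_mem_cycS hC4 hC6 ha hb

theorem stmt_7 {V : Type*} [Fintype V] (G : SimpleGraph V)
    (hC4 : _root_.Free G (cycleGraph 4)) (hC6 : _root_.Free G (cycleGraph 6))
    (hF1 : _root_.Free G F1) (hF2 : _root_.Free G F2) (hP6 : _root_.Free G (pathGraph 6))
    (hsa : IsStrongAtom G)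
    (v : ZMod 5 → V) (hv : IsInducedC5 G v)
    (hmax5 : ∀ w : ZMod 5 → V, IsInducedC5 G w →
      (cycSdeg G w 5).ncard ≤ (cycSdeg G v 5).ncard)
    (hmin3 : ∀ w : ZMod 5 → V, IsInducedC5 G w →
      (cycSdeg G w 5).ncard = (cycSdeg G v 5).ncard →
      (cycSdeg G v 3).ncard ≤ (cycSdeg G w 3).ncard)
    (i : ZMod 5) :
    CompleteTo G (cycS G v {i - 1, i, i + 1}) (cycS G v {i, i + 1, i + 2}) :=
  stmt_7_general G hC4 hC6 v hv hmax5 hmin3 i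
end

section
/- Let G be a finite simple complete split graph with vertex set V, let k be a positive integer, and let L be a list assignment with L(u) ⊆ {1,...,k} for every u ∈ V. Let G' be the graph obtained from G by adding a clique X = {x_1,...,x_k} and, for each u ∈ V, a clique Y_u of k − |L(u)| new vertices, making every vertex of Y_u adjacent to u and to x_i for every i ∈ L(u), with no other edges added. Then G has a proper colouring c with c(u) ∈ L(u) for all u ∈ V if and only if G' has a proper k-colouring. -/
open SimpleGraph

/-- `G` is a complete split graph: its vertex set is partitioned into a clique `C` and an
independent set `I` that are complete to each other. -/
def IsCompleteSplit {V : Type*} (G : SimpleGraph V) : Prop :=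
  ∃ C I : Set V, C ∪ I = Set.univ ∧ Disjoint C I ∧ G.IsClique C ∧
    (∀ a ∈ I, ∀ b ∈ I, ¬ G.Adj a b) ∧ ∀ a ∈ C, ∀ b ∈ I, G.Adj a b

/-- The graph `G'` of the hardness construction: starting from `G` (with list assignment
`L u ⊆ {1,…,k}`, colours modelled as `Fin k`), add a clique `X` on `k` vertices
`x_1,…,x_k`, and for each `u` a clique `Y_u` on `k - |L u|` new vertices, each adjacent
precisely to `u` and to the `x_i` with `i ∈ L u` (no other edges are added). -/
def GExt {V : Type*} (G : SimpleGraph V) (k : ℕ) (L : V → Finset (Fin k)) :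
    SimpleGraph (V ⊕ (Fin k ⊕ Σ u : V, Fin (k - (L u).card))) :=
  SimpleGraph.fromRel (fun a b =>
    match a, b with
    | Sum.inl u, Sum.inl w => G.Adj u w
    | Sum.inr (Sum.inl _), Sum.inr (Sum.inl _) => True
    | Sum.inr (Sum.inr p), Sum.inr (Sum.inr q) => p.1 = q.1
    | Sum.inl u, Sum.inr (Sum.inr q) => u = q.1
    | Sum.inr (Sum.inl i), Sum.inr (Sum.inr q) => i ∈ L q.1
    | _, _ => False)

theorem stmt_15 {V : Type*} [Fintype V] (G : SimpleGraph V) (hG : IsCompleteSplit G)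
    (k : ℕ) (hk : 0 < k) (L : V → Finset (Fin k)) :
    (∃ c : V → Fin k, (∀ u w, G.Adj u w → c u ≠ c w) ∧ ∀ u, c u ∈ L u) ↔
      (GExt G k L).Colorable k := by
  classical
  constructor
  · rintro ⟨c, hc, hcL⟩
    have hcompl : ∀ u : V, ((L u)ᶜ : Finset (Fin k)).card = k - (L u).card := by
      intro u; simp [Finset.card_compl]
    let e : ∀ u : V, Fin (k - (L u).card) ≃ ((L u)ᶜ : Finset (Fin k)) :=
      fun u => (Finset.equivFinOfCardEq (hcompl u)).symm
    have he : ∀ u j, ((e u j : Fin k)) ∉ L u := fun u j => by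
      exact Finset.mem_compl.mp (e u j).2
    have heinj : ∀ u, Function.Injective (fun j => ((e u j : Fin k))) := by
      intro u j j' h
      exact (e u).injective (Subtype.ext h)
    refine ⟨SimpleGraph.Coloring.mk
      (Sum.elim c (Sum.elim id (fun p => (e p.1 p.2 : Fin k)))) ?_⟩
    intro a b hab
    rw [GExt, SimpleGraph.fromRel_adj] at hab
    obtain ⟨hne, h⟩ := hab
    rcases a with u | i | ⟨u, j⟩ <;> rcases b with w | i' | ⟨w, j'⟩ <;>
        simp only [Sum.elim_inl, Sum.elim_inr, id_eq] at *
    · exact hc u w (h.elim id fun h' => h'.symm)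
    · exact h.elim (fun h' => h'.elim) (fun h' => h'.elim)
    · obtain hw : u = w := h.elim id fun h' => h'.elim
      subst hw
      exact fun hcontra => he u j' (hcontra ▸ hcL u)
    · exact h.elim (fun h' => h'.elim) (fun h' => h'.elim)
    · exact fun hcontra => hne (by simp [hcontra])
    · obtain hi : i ∈ L w := h.elim id fun h' => h'.elim
      exact fun hcontra => he w j' (hcontra ▸ hi)
    · obtain hw : u = w := (h.elim (fun h' => h'.elim) id).symm
      subst hw
      exact fun hcontra => he u j (hcontra.symm ▸ hcL u)
    · obtain hi : i' ∈ L u := h.elim (fun h' => h'.elim) id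
      exact fun hcontra => he u j (hcontra.symm ▸ hi)
    · obtain hw : u = w := h.elim id fun h' => h'.symm
      subst hw
      have hjj : j ≠ j' := fun hj => hne (by simp [hj])
      exact fun hcontra => hjj (heinj u hcontra)
  · rintro ⟨C⟩
    set σ : Fin k → Fin k := fun i => C (Sum.inr (Sum.inl i)) with hσdef
    have hσinj : Function.Injective σ := by
      intro i j hij
      by_contra hne
      have hadj : (GExt G k L).Adj (Sum.inr (Sum.inl i)) (Sum.inr (Sum.inl j)) := by
        rw [GExt, SimpleGraph.fromRel_adj]
        exact ⟨by simp [hne], Or.inl trivial⟩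
      exact C.valid hadj hij
    have hσbij : Function.Bijective σ := Finite.injective_iff_bijective.mp hσinj
    let σe : Fin k ≃ Fin k := Equiv.ofBijective σ hσbij
    have key : ∀ u, C (Sum.inl u) ∈ (L u).image σ := by
      intro u
      set g : Fin (k - (L u).card) → Fin k :=
        fun j => C (Sum.inr (Sum.inr ⟨u, j⟩)) with hgdef
      have hginj : Function.Injective g := by
        intro j j' hjj
        by_contra hne
        have hadj : (GExt G k L).Adj (Sum.inr (Sum.inr ⟨u, j⟩)) (Sum.inr (Sum.inr ⟨u, j'⟩)) := by
          rw [GExt, SimpleGraph.fromRel_adj]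
          exact ⟨by simp [hne], Or.inl rfl⟩
        exact C.valid hadj hjj
      have hsub : Finset.univ.image g ⊆ ((L u).image σ)ᶜ := by
        intro x hx
        obtain ⟨j, _, rfl⟩ := Finset.mem_image.mp hx
        rw [Finset.mem_compl]
        intro hmem
        obtain ⟨i, hi, hix⟩ := Finset.mem_image.mp hmem
        have hadj : (GExt G k L).Adj (Sum.inr (Sum.inl i)) (Sum.inr (Sum.inr ⟨u, j⟩)) := by
          rw [GExt, SimpleGraph.fromRel_adj]
          exact ⟨by simp, Or.inl hi⟩
        exact C.valid hadj hix
      have hcard : (Finset.univ.image g).card = (((L u).image σ)ᶜ).card := by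
        rw [Finset.card_image_of_injective _ hginj,
          Finset.card_compl, Finset.card_image_of_injective _ hσinj]
        simp
      have heq : Finset.univ.image g = ((L u).image σ)ᶜ :=
        Finset.eq_of_subset_of_card_le hsub (le_of_eq hcard.symm)
      have hnotin : C (Sum.inl u) ∉ Finset.univ.image g := by
        intro hx
        obtain ⟨j, _, hj⟩ := Finset.mem_image.mp hx
        have hadj : (GExt G k L).Adj (Sum.inl u) (Sum.inr (Sum.inr ⟨u, j⟩)) := by
          rw [GExt, SimpleGraph.fromRel_adj]
          exact ⟨by simp, Or.inl rfl⟩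
        exact C.valid hadj hj.symm
      rw [heq, Finset.mem_compl, not_not] at hnotin
      exact hnotin
    refine ⟨fun u => σe.symm (C (Sum.inl u)), ?_, ?_⟩
    · intro u w huw h
      have hadj : (GExt G k L).Adj (Sum.inl u) (Sum.inl w) := by
        rw [GExt, SimpleGraph.fromRel_adj]
        exact ⟨by simp [huw.ne], Or.inl huw⟩
      have : C (Sum.inl u) ≠ C (Sum.inl w) := C.valid hadj
      exact this (σe.symm.injective.eq_iff.mp h)
    · intro u
      obtain ⟨i, hi, hix⟩ := Finset.mem_image.mp (key u)
      have : σe.symm (C (Sum.inl u)) = i := by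
        rw [← hix]; exact σe.symm_apply_apply i
      show σe.symm (C (Sum.inl u)) ∈ L u
      rw [this]; exact hi
end

section
/- Let W be a finite simple (C3,C4)-free graph such that for every vertex v of W, the set of vertices of W distinct from v and non-adjacent to v is not an independent set of W. Then the complement of W has no clique cutset; that is, the complement of W is an atom. (This is the key step in the paper's proof that the complement of every k-subdivided wall is an atom.) -/
open SimpleGraph

/-- `s` is an independent set of `G`. -/
def IsIndepSet {V : Type*} (G : SimpleGraph V) (s : Set V) : Prop :=
  s.Pairwise fun a b => ¬ G.Adj a b

/-! A clique `K` of `Wᶜ` is independent in `W`, so it suffices that `Wᶜ - K` is connected (for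
`K = ∅` this also makes `Wᶜ` connected). Take `u`, `v` outside `K` adjacent in `W`. Their
non-neighbourhoods are not independent, hence not inside `K`: pick `x ∉ K` non-adjacent to `u` and
`y ∉ K` non-adjacent to `v`. Unless one of them is a common non-neighbour of `u` and `v`, both `v x`
and `u y` are edges of `W`, and an edge `x y` would make `u v x y` an induced 4-cycle; so
`u x y v` is a path in `Wᶜ - K`. -/

lemma not_adj_of_free_cycleGraph_four {V : Type*} {W : SimpleGraph V}
    (hC4 : _root_.Free W (cycleGraph 4)) {u v x y : V} (huv : W.Adj u v) (hvx : W.Adj v x)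
    (hyu : W.Adj y u) (hux : ¬ W.Adj u x) (hvy : ¬ W.Adj v y) (hux' : u ≠ x) (hvy' : v ≠ y) :
    ¬ W.Adj x y := by
  intro hxy
  have hxu : ¬ W.Adj x u := fun h => hux h.symm
  have hyv : ¬ W.Adj y v := fun h => hvy h.symm
  refine hC4.false ⟨⟨![u, v, x, y], fun i j hij => ?_⟩, fun {i j} => ?_⟩
  · fin_cases i <;> fin_cases j <;>
      simp_all [huv.ne, hvx.ne, hxy.ne, hyu.ne, huv.ne.symm, hvx.ne.symm, hxy.ne.symm, hyu.ne.symm,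
        hux'.symm, hvy'.symm]
  · change W.Adj (![u, v, x, y] i) (![u, v, x, y] j) ↔ _
    fin_cases i <;> fin_cases j <;>
      simp [cycleGraph_adj', huv, hvx, hxy, hyu, huv.symm, hvx.symm, hxy.symm, hyu.symm, hux, hvy,
        hxu, hyv] <;> decide

lemma exists_notMem_nonadj {V : Type*} {W : SimpleGraph V}
    (hnonnbr : ∀ x : V, ¬ _root_.IsIndepSet W {u | u ≠ x ∧ ¬ W.Adj x u})
    {K : Set V} (hK : _root_.IsIndepSet W K) (u : V) : ∃ x ∉ K, x ≠ u ∧ ¬ W.Adj u x := by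
  by_contra! h
  exact hnonnbr u (hK.mono fun x ⟨hxu, hux⟩ => by_contra fun hxK => hux (h x hxK hxu))

lemma preconnected_compl_induce_compl {V : Type*} {W : SimpleGraph V}
    (hC4 : _root_.Free W (cycleGraph 4))
    (hnonnbr : ∀ x : V, ¬ _root_.IsIndepSet W {u | u ≠ x ∧ ¬ W.Adj x u})
    {K : Set V} (hK : _root_.IsIndepSet W K) : (Wᶜ.induce Kᶜ).Preconnected := by
  have reach {a b : V} (ha : a ∉ K) (hb : b ∉ K) (hab : a ≠ b) (hW : ¬ W.Adj a b) :
      (Wᶜ.induce Kᶜ).Reachable ⟨a, ha⟩ ⟨b, hb⟩ :=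
    (show (Wᶜ.induce Kᶜ).Adj ⟨a, ha⟩ ⟨b, hb⟩ from ⟨hab, hW⟩).reachable
  rintro ⟨u, hu⟩ ⟨v, hv⟩
  obtain rfl | huv := eq_or_ne u v
  · rfl
  by_cases hW : W.Adj u v
  swap
  · exact reach hu hv huv hW
  obtain ⟨x, hxK, hxu, hux⟩ := exists_notMem_nonadj hnonnbr hK u
  obtain ⟨y, hyK, hyv, hvy⟩ := exists_notMem_nonadj hnonnbr hK v
  have hxv : x ≠ v := by rintro rfl; exact hux hW
  have hyu : y ≠ u := by rintro rfl; exact hvy hW.symm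
  by_cases hvx : W.Adj v x
  swap
  · exact (reach hu hxK hxu.symm hux).trans (reach hxK hv hxv fun h => hvx h.symm)
  by_cases huy : W.Adj u y
  swap
  · exact (reach hu hyK hyu.symm huy).trans (reach hyK hv hyv fun h => hvy h.symm)
  have hxy : x ≠ y := by rintro rfl; exact hvy hvx
  have hWxy : ¬ W.Adj x y :=
    not_adj_of_free_cycleGraph_four hC4 hW hvx huy.symm hux hvy hxu.symm hyv.symm
  exact ((reach hu hxK hxu.symm hux).trans (reach hxK hyK hxy hWxy)).trans
    (reach hyK hv hyv fun h => hvy h.symm)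

lemma not_isCliqueCutset_of_preconnected {V : Type*} {G : SimpleGraph V} {K : Set V}
    (hG : G.Preconnected) (hK : (G.induce Kᶜ).Preconnected) : ¬ IsCliqueCutset G K := by
  rintro ⟨-, hlt⟩
  rcases isEmpty_or_nonempty (Kᶜ : Set V) with hE | ⟨⟨x, hx⟩⟩
  · simp at hlt
  · rw [Nat.card_eq_one_iff_unique.mpr
        ⟨hG.subsingleton_connectedComponent, ⟨G.connectedComponentMk x⟩⟩,
      Nat.card_eq_one_iff_unique.mpr
        ⟨hK.subsingleton_connectedComponent, ⟨(G.induce Kᶜ).connectedComponentMk ⟨x, hx⟩⟩⟩] at hlt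
    exact lt_irrefl 1 hlt

theorem stmt_17_general {V : Type*} (W : SimpleGraph V)
    (hC4 : _root_.Free W (cycleGraph 4))
    (hnonnbr : ∀ x : V, ¬ _root_.IsIndepSet W {u | u ≠ x ∧ ¬ W.Adj x u}) :
    IsGraphAtom Wᶜ := by
  intro K hK
  have hKindep : _root_.IsIndepSet W K := fun a ha b hb hab => (hK.1 ha hb hab).2
  have hWc : Wᶜ.Preconnected := fun u v => by
    simpa using (preconnected_compl_induce_compl hC4 hnonnbr (K := ∅) (Set.pairwise_empty _)
      ⟨u, by simp⟩ ⟨v, by simp⟩).map (Embedding.induce _).toHom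
  exact not_isCliqueCutset_of_preconnected hWc
    (preconnected_compl_induce_compl hC4 hnonnbr hKindep) hK

theorem stmt_17 {V : Type*} [Fintype V] (W : SimpleGraph V)
    (hC3 : _root_.Free W (cycleGraph 3)) (hC4 : _root_.Free W (cycleGraph 4))
    (hnonnbr : ∀ x : V, ¬ _root_.IsIndepSet W {u | u ≠ x ∧ ¬ W.Adj x u}) :
    IsGraphAtom Wᶜ :=
  stmt_17_general W hC4 hnonnbr
end
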